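/- arXiv:2104.11322 — 4 statements merged into one kernel-verified Lean document; each statement's English description precedes it below -/
import Mathlib

section
/- Let ϑ ∈ ℝ and let g₁, g₂ : (0,∞) → ℝ be differentiable. Define the micro-distortion field P : {x ∈ ℝ³ : x₁²+x₂² > 0} → ℝ^{3×3} by P(x) = ϑ·[[0, −x₃, −g₂(r)x₂], [x₃, 0, g₂(r)x₁], [g₁(r)x₂, −g₁(r)x₁, 0]] where r = √(x₁²+x₂²). Then the row-wise Curl of P is given by Curl P(x) = ϑ·[[1 − g₂(r) − g₂′(r)x₂²/r, g₂′(r)x₁x₂/r, 0], [g₂′(r)x₁x₂/r, 1 − g₂(r) − g₂′(r)x₁²/r, 0], [0, 0, −(2g₁(r) + r·g₁′(r))]]; in particular Curl P(x) is a symmetric matrix, i.e. skew(Curl P) = 0. -/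
open Matrix MeasureTheory Real Filter Asymptotics

noncomputable section

abbrev Mat3 := Matrix (Fin 3) (Fin 3) ℝ

/-- Partial derivative of a scalar field in the `j`-th coordinate direction. -/
def pd (j : Fin 3) (f : (Fin 3 → ℝ) → ℝ) (x : Fin 3 → ℝ) : ℝ :=
  fderiv ℝ f x (Pi.single j 1)

/-- Jacobian matrix (Du)ᵢⱼ = ∂uᵢ/∂xⱼ of a vector field. -/
def jac (u : (Fin 3 → ℝ) → Fin 3 → ℝ) (x : Fin 3 → ℝ) : Mat3 :=
  Matrix.of fun i j => pd j (fun y => u y i) x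

/-- Symmetric part of a matrix. -/
def symm3 (P : Mat3) : Mat3 := (1/2 : ℝ) • (P + Pᵀ)

/-- Skew-symmetric part of a matrix. -/
def skew3 (P : Mat3) : Mat3 := (1/2 : ℝ) • (P - Pᵀ)

/-- Deviatoric part of a matrix. -/
def dev3 (P : Mat3) : Mat3 := P - (Matrix.trace P / 3) • (1 : Mat3)

/-- Squared Frobenius norm. -/
def frob2 (P : Mat3) : ℝ := ∑ i, ∑ j, (P i j)^2

/-- Frobenius inner product. -/
def frobInner (P Q : Mat3) : ℝ := ∑ i, ∑ j, P i j * Q i j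

/-- Row-wise divergence of a matrix field. -/
def matDiv (σ : (Fin 3 → ℝ) → Mat3) (x : Fin 3 → ℝ) : Fin 3 → ℝ :=
  fun i => ∑ j, pd j (fun y => σ y i j) x

/-- Curl of a vector field. -/
def curl3 (v : (Fin 3 → ℝ) → Fin 3 → ℝ) (x : Fin 3 → ℝ) : Fin 3 → ℝ :=
  ![pd 1 (fun y => v y 2) x - pd 2 (fun y => v y 1) x,
    pd 2 (fun y => v y 0) x - pd 0 (fun y => v y 2) x,
    pd 0 (fun y => v y 1) x - pd 1 (fun y => v y 0) x]

/-- Row-wise Curl of a matrix field. -/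
def matCurl (P : (Fin 3 → ℝ) → Mat3) (x : Fin 3 → ℝ) : Mat3 :=
  Matrix.of fun i => curl3 (fun y => P y i) x

/-- The torsion displacement field u(x) = ϑ·(−x₂x₃, x₁x₃, 0). -/
def torsionU (ϑ : ℝ) (x : Fin 3 → ℝ) : Fin 3 → ℝ :=
  ![-(ϑ * x 1 * x 2), ϑ * x 0 * x 2, 0]

/-- The micro-distortion ansatz for the torsion problem. -/
def microP (ϑ : ℝ) (g₁ g₂ : ℝ → ℝ) (x : Fin 3 → ℝ) : Mat3 :=
  Matrix.of
    ![![0, -(ϑ * x 2), -(ϑ * g₂ (Real.sqrt (x 0 ^ 2 + x 1 ^ 2)) * x 1)],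
      ![ϑ * x 2, 0, ϑ * g₂ (Real.sqrt (x 0 ^ 2 + x 1 ^ 2)) * x 0],
      ![ϑ * g₁ (Real.sqrt (x 0 ^ 2 + x 1 ^ 2)) * x 1,
        -(ϑ * g₁ (Real.sqrt (x 0 ^ 2 + x 1 ^ 2)) * x 0), 0]]

/-!
Every entry of `microP` is either a multiple of a coordinate or of the form `c · g(r) · x_k`, and
since `∂ⱼ r = x_j / r` for `j ∈ {0, 1}` and `∂₂ r = 0`, the product rule gives
`∂ⱼ (g(r) x_k) = g'(r) (x_j / r) x_k + g(r) δ_jk`. The two off-diagonal entries of the curl are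
then both `ϑ g₂'(r) x₀ x₁ / r`, and the `(2,2)` entry collapses using `x₀² + x₁² = r²`.
-/

lemma pd_eq_of_hasFDerivAt {f : (Fin 3 → ℝ) → ℝ} {L : (Fin 3 → ℝ) →L[ℝ] ℝ} {x : Fin 3 → ℝ}
    (h : HasFDerivAt f L x) (j : Fin 3) : pd j f x = L (Pi.single j 1) := by
  rw [pd, h.fderiv]

@[simp]
lemma pd_const (c : ℝ) (j : Fin 3) (x : Fin 3 → ℝ) : pd j (fun _ => c) x = 0 := by
  simp [pd]

@[simp]
lemma pd_neg (j : Fin 3) (f : (Fin 3 → ℝ) → ℝ) (x : Fin 3 → ℝ) :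
    pd j (fun y => -f y) x = -pd j f x := by
  simp [pd]

lemma pd_const_mul_apply (c : ℝ) (k j : Fin 3) (x : Fin 3 → ℝ) :
    pd j (fun y => c * y k) x = if k = j then c else 0 := by
  rw [pd_eq_of_hasFDerivAt ((hasFDerivAt_apply k x).const_mul c)]
  simp [Pi.single_apply]

lemma hasFDerivAt_sqrt_sq_add_sq {x : Fin 3 → ℝ} (hx : 0 < x 0 ^ 2 + x 1 ^ 2) :
    HasFDerivAt (fun y : Fin 3 → ℝ => √(y 0 ^ 2 + y 1 ^ 2))
      ((√(x 0 ^ 2 + x 1 ^ 2))⁻¹ •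
        (x 0 • ContinuousLinearMap.proj (R := ℝ) (φ := fun _ : Fin 3 => ℝ) 0 +
          x 1 • ContinuousLinearMap.proj (R := ℝ) (φ := fun _ : Fin 3 => ℝ) 1)) x := by
  have h₀ : HasFDerivAt (fun y : Fin 3 → ℝ => y 0)
      (ContinuousLinearMap.proj (R := ℝ) (φ := fun _ : Fin 3 => ℝ) 0) x := hasFDerivAt_apply 0 x
  have h₁ : HasFDerivAt (fun y : Fin 3 → ℝ => y 1)
      (ContinuousLinearMap.proj (R := ℝ) (φ := fun _ : Fin 3 => ℝ) 1) x := hasFDerivAt_apply 1 x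
  refine (((h₀.pow 2).add (h₁.pow 2)).sqrt hx.ne').congr_fderiv ?_
  ext v
  simp only [Fin.isValue, Pi.add_apply, one_div, _root_.mul_inv_rev, Nat.add_one_sub_one, pow_one,
    nsmul_eq_mul, Nat.cast_ofNat, smul_add, _root_.add_apply, _root_.smul_apply,
    ContinuousLinearMap.proj_apply, smul_eq_mul]
  ring

lemma pd_const_mul_radial_mul_apply (c : ℝ) {g : ℝ → ℝ} {x : Fin 3 → ℝ}
    (hx : 0 < x 0 ^ 2 + x 1 ^ 2) (hg : DifferentiableAt ℝ g (√(x 0 ^ 2 + x 1 ^ 2)))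
    (k j : Fin 3) :
    pd j (fun y => c * g (√(y 0 ^ 2 + y 1 ^ 2)) * y k) x =
      c * deriv g (√(x 0 ^ 2 + x 1 ^ 2)) * (![x 0, x 1, 0] j / √(x 0 ^ 2 + x 1 ^ 2)) * x k
        + if k = j then c * g (√(x 0 ^ 2 + x 1 ^ 2)) else 0 := by
  refine (pd_eq_of_hasFDerivAt (((hg.hasDerivAt.comp_hasFDerivAt x
    (hasFDerivAt_sqrt_sq_add_sq hx)).const_mul c).mul (hasFDerivAt_apply k x)) j).trans ?_
  fin_cases j <;> simp [Pi.single_apply] <;> ring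

def curlMicroP (ϑ : ℝ) (g₁ g₂ : ℝ → ℝ) (x : Fin 3 → ℝ) : Mat3 :=
  ϑ • Matrix.of
    ![![1 - g₂ (Real.sqrt (x 0 ^ 2 + x 1 ^ 2))
          - deriv g₂ (Real.sqrt (x 0 ^ 2 + x 1 ^ 2)) * (x 1) ^ 2
              / Real.sqrt (x 0 ^ 2 + x 1 ^ 2),
        deriv g₂ (Real.sqrt (x 0 ^ 2 + x 1 ^ 2)) * x 0 * x 1
          / Real.sqrt (x 0 ^ 2 + x 1 ^ 2), 0],
      ![deriv g₂ (Real.sqrt (x 0 ^ 2 + x 1 ^ 2)) * x 0 * x 1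
          / Real.sqrt (x 0 ^ 2 + x 1 ^ 2),
        1 - g₂ (Real.sqrt (x 0 ^ 2 + x 1 ^ 2))
          - deriv g₂ (Real.sqrt (x 0 ^ 2 + x 1 ^ 2)) * (x 0) ^ 2
              / Real.sqrt (x 0 ^ 2 + x 1 ^ 2), 0],
      ![0, 0, -(2 * g₁ (Real.sqrt (x 0 ^ 2 + x 1 ^ 2))
          + Real.sqrt (x 0 ^ 2 + x 1 ^ 2)
              * deriv g₁ (Real.sqrt (x 0 ^ 2 + x 1 ^ 2)))]]

theorem matCurl_microP (ϑ : ℝ) {g₁ g₂ : ℝ → ℝ} {x : Fin 3 → ℝ} (hx : 0 < x 0 ^ 2 + x 1 ^ 2)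
    (hg₁ : DifferentiableAt ℝ g₁ (√(x 0 ^ 2 + x 1 ^ 2)))
    (hg₂ : DifferentiableAt ℝ g₂ (√(x 0 ^ 2 + x 1 ^ 2))) :
    matCurl (microP ϑ g₁ g₂) x = curlMicroP ϑ g₁ g₂ x := by
  have hr : √(x 0 ^ 2 + x 1 ^ 2) ^ 2 = x 0 ^ 2 + x 1 ^ 2 := Real.sq_sqrt hx.le
  ext i j
  fin_cases i <;> fin_cases j <;>
    simp [matCurl, curl3, microP, curlMicroP, pd_const_mul_apply,
      pd_const_mul_radial_mul_apply _ hx hg₁, pd_const_mul_radial_mul_apply _ hx hg₂]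
  all_goals field_simp
  · ring
  · ring
  · linear_combination ϑ * deriv g₁ √(x 0 ^ 2 + x 1 ^ 2) * hr

theorem curlMicroP_isSymm (ϑ : ℝ) (g₁ g₂ : ℝ → ℝ) (x : Fin 3 → ℝ) :
    (curlMicroP ϑ g₁ g₂ x).IsSymm := by
  ext i j
  fin_cases i <;> fin_cases j <;> rfl

lemma skew3_eq_zero_of_isSymm {P : Mat3} (hP : P.IsSymm) : skew3 P = 0 := by
  rw [skew3, hP.eq, sub_self, smul_zero]

/-- the row-wise Curl of the torsion micro-distortion ansatz, and its symmetry. -/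
theorem curl_of_torsion_microdistortion (ϑ : ℝ) (g₁ g₂ : ℝ → ℝ)
    (hg₁ : ∀ r : ℝ, 0 < r → DifferentiableAt ℝ g₁ r)
    (hg₂ : ∀ r : ℝ, 0 < r → DifferentiableAt ℝ g₂ r) :
    ∀ x : Fin 3 → ℝ, 0 < x 0 ^ 2 + x 1 ^ 2 →
      matCurl (microP ϑ g₁ g₂) x =
        ϑ • Matrix.of
          ![![1 - g₂ (Real.sqrt (x 0 ^ 2 + x 1 ^ 2))
                - deriv g₂ (Real.sqrt (x 0 ^ 2 + x 1 ^ 2)) * (x 1) ^ 2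
                    / Real.sqrt (x 0 ^ 2 + x 1 ^ 2),
              deriv g₂ (Real.sqrt (x 0 ^ 2 + x 1 ^ 2)) * x 0 * x 1
                / Real.sqrt (x 0 ^ 2 + x 1 ^ 2), 0],
            ![deriv g₂ (Real.sqrt (x 0 ^ 2 + x 1 ^ 2)) * x 0 * x 1
                / Real.sqrt (x 0 ^ 2 + x 1 ^ 2),
              1 - g₂ (Real.sqrt (x 0 ^ 2 + x 1 ^ 2))
                - deriv g₂ (Real.sqrt (x 0 ^ 2 + x 1 ^ 2)) * (x 0) ^ 2
                    / Real.sqrt (x 0 ^ 2 + x 1 ^ 2), 0],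
            ![0, 0, -(2 * g₁ (Real.sqrt (x 0 ^ 2 + x 1 ^ 2))
                + Real.sqrt (x 0 ^ 2 + x 1 ^ 2)
                    * deriv g₁ (Real.sqrt (x 0 ^ 2 + x 1 ^ 2)))]] ∧
      skew3 (matCurl (microP ϑ g₁ g₂) x) = 0 := by
  intro x hx
  have hr : 0 < √(x 0 ^ 2 + x 1 ^ 2) := Real.sqrt_pos.2 hx
  have hcurl := matCurl_microP ϑ hx (hg₁ _ hr) (hg₂ _ hr)
  exact ⟨hcurl, hcurl ▸ skew3_eq_zero_of_isSymm (curlMicroP_isSymm ϑ g₁ g₂ x)⟩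
end
end

section
/- Define I₁ : ℝ → ℝ by I₁(x) = ∫₀^π e^{x cos τ} cos τ dτ (the modified Bessel function of the first kind of order one, up to normalization). Then I₁ is twice differentiable on ℝ and satisfies the modified Bessel differential equation of order one: x²·I₁″(x) + x·I₁′(x) − (x² + 1)·I₁(x) = 0 for every x ∈ ℝ. -/
open Real intervalIntegral

noncomputable section

/-- The modified Bessel function of the first kind of order one, up to normalization:
I₁(x) = ∫₀^π e^{x cos τ} cos τ dτ. -/
def besselI1 (x : ℝ) : ℝ := ∫ τ in (0:ℝ)..π, Real.exp (x * Real.cos τ) * Real.cos τ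

/-!
Differentiating under the integral sign shows that the derivative of
`Mₙ(x) = ∫₀^π e^{x cos τ} cosⁿ τ dτ` is `Mₙ₊₁`, so `I₁ = M₁`, `I₁' = M₂`, `I₁'' = M₃`.
The combination `x² M₃ + x M₂ - (x² + 1) M₁` is the integral of the `τ`-derivative of
`e^{x cos τ} sin τ (x cos τ - 1)`, which vanishes at `0` and `π`.
-/

open MeasureTheory Metric

lemma norm_exp_mul_cos_mul_cos_pow_le (y τ : ℝ) (n : ℕ) :
    ‖exp (y * cos τ) * cos τ ^ n‖ ≤ exp |y| := by
  have hexp : exp (y * cos τ) ≤ exp |y| := exp_le_exp.mpr <|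
    calc y * cos τ ≤ |y| * |cos τ| := by rw [← abs_mul]; exact le_abs_self _
      _ ≤ |y| := mul_le_of_le_one_right (abs_nonneg y) (abs_cos_le_one τ)
  calc ‖exp (y * cos τ) * cos τ ^ n‖ = exp (y * cos τ) * |cos τ| ^ n := by
        rw [norm_mul, norm_pow, norm_of_nonneg (exp_pos _).le, norm_eq_abs]
    _ ≤ exp |y| * 1 := by
        gcongr
        exact pow_le_one₀ (abs_nonneg _) (abs_cos_le_one τ)
    _ = exp |y| := mul_one _

theorem hasDerivAt_integral_exp_mul_cos_mul_cos_pow (a b x : ℝ) (n : ℕ) :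
    HasDerivAt (fun y => ∫ τ in a..b, exp (y * cos τ) * cos τ ^ n)
      (∫ τ in a..b, exp (x * cos τ) * cos τ ^ (n + 1)) x := by
  have hbound : ∀ τ, ∀ y ∈ ball x 1, ‖exp (y * cos τ) * cos τ ^ (n + 1)‖ ≤ exp (|x| + 1) :=
    fun τ y hy => (norm_exp_mul_cos_mul_cos_pow_le y τ (n + 1)).trans <| exp_le_exp.mpr <| by
      have := abs_sub_abs_le_abs_sub y x
      rw [mem_ball, dist_eq] at hy
      linarith
  have hderiv : ∀ τ y, HasDerivAt (fun y => exp (y * cos τ) * cos τ ^ n)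
      (exp (y * cos τ) * cos τ ^ (n + 1)) y := fun τ y =>
    ((((hasDerivAt_id' y).mul_const (cos τ)).exp).mul_const (cos τ ^ n)).congr_deriv (by ring)
  refine (hasDerivAt_integral_of_dominated_loc_of_deriv_le (ball_mem_nhds x one_pos)
    (.of_forall fun y => (by fun_prop : Continuous _).aestronglyMeasurable)
    ((by fun_prop : Continuous _).intervalIntegrable a b)
    (by fun_prop : Continuous _).aestronglyMeasurable
    (.of_forall fun τ _ => hbound τ) intervalIntegrable_const
    (.of_forall fun τ _ y _ => hderiv τ y)).2

def expCosMoment (n : ℕ) (x : ℝ) : ℝ := ∫ τ in (0:ℝ)..π, exp (x * cos τ) * cos τ ^ n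

theorem hasDerivAt_expCosMoment (n : ℕ) (x : ℝ) :
    HasDerivAt (expCosMoment n) (expCosMoment (n + 1) x) x :=
  hasDerivAt_integral_exp_mul_cos_mul_cos_pow 0 π x n

theorem deriv_expCosMoment (n : ℕ) : deriv (expCosMoment n) = expCosMoment (n + 1) :=
  funext fun x => (hasDerivAt_expCosMoment n x).deriv

theorem besselI1_eq_expCosMoment : besselI1 = expCosMoment 1 := by
  funext x
  simp only [besselI1, expCosMoment, pow_one]

lemma hasDerivAt_exp_mul_cos_mul_sin_mul (x τ : ℝ) :
    HasDerivAt (fun τ => exp (x * cos τ) * (sin τ * (x * cos τ - 1)))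
      (x ^ 2 * (exp (x * cos τ) * cos τ ^ 3) + x * (exp (x * cos τ) * cos τ ^ 2)
        - (x ^ 2 + 1) * (exp (x * cos τ) * cos τ ^ 1)) τ := by
  have h := (((hasDerivAt_cos τ).const_mul x).exp).fun_mul
    ((hasDerivAt_sin τ).fun_mul (((hasDerivAt_cos τ).const_mul x).sub_const 1))
  refine h.congr_deriv ?_
  linear_combination (-(exp (x * cos τ) * x ^ 2 * cos τ)) * Real.sin_sq τ

theorem expCosMoment_ode (x : ℝ) :
    x ^ 2 * expCosMoment 3 x + x * expCosMoment 2 x - (x ^ 2 + 1) * expCosMoment 1 x = 0 := by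
  have hint : ∀ n : ℕ, IntervalIntegrable (fun τ => exp (x * cos τ) * cos τ ^ n) volume 0 π :=
    fun n => (by fun_prop : Continuous _).intervalIntegrable 0 π
  simp only [expCosMoment, ← intervalIntegral.integral_const_mul]
  rw [← integral_add ((hint 3).const_mul _) ((hint 2).const_mul _),
    ← integral_sub (((hint 3).const_mul _).add ((hint 2).const_mul _)) ((hint 1).const_mul _),
    integral_eq_sub_of_hasDerivAt (fun τ _ => hasDerivAt_exp_mul_cos_mul_sin_mul x τ)
      ((by fun_prop : Continuous _).intervalIntegrable 0 π)]
  simp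

/-- besselI1 is twice differentiable and satisfies the modified Bessel
differential equation of order one. -/
theorem besselI1_ode :
    (∀ x : ℝ, DifferentiableAt ℝ besselI1 x ∧ DifferentiableAt ℝ (deriv besselI1) x) ∧
    (∀ x : ℝ,
      x ^ 2 * deriv (deriv besselI1) x + x * deriv besselI1 x
        - (x ^ 2 + 1) * besselI1 x = 0) := by
  rw [besselI1_eq_expCosMoment, deriv_expCosMoment, deriv_expCosMoment]
  exact ⟨fun x => ⟨(hasDerivAt_expCosMoment 1 x).differentiableAt,
    (hasDerivAt_expCosMoment 2 x).differentiableAt⟩, expCosMoment_ode⟩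
end
end

section
/- Let μ > 0, L_c > 0, a₁ > 0, μ_e > 0, μ_micro > 0 and set f₁ = √(2(μ_e+μ_micro)/(a₁μ)). Define I₁(x) = ∫₀^π e^{x cos τ} cos τ dτ. Then for every constant A ∈ ℝ, the function g_m : (0,∞) → ℝ, g_m(r) = A·I₁(f₁·r/L_c)/r − μ_e/(μ_e+μ_micro), is twice differentiable and solves the micro-strain torsion equilibrium equation a₁μL_c²(3g_m′(r) + r·g_m″(r)) − 2rμ_e(g_m(r)+1) − 2r·g_m(r)·μ_micro = 0 for every r > 0. -/
/-!
With `J n x = ∫₀^π e^{x cos τ} cos^n τ dτ` (so `I₁ = J 1`), differentiation under the integral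
sign gives `J n' = J (n + 1)`. Integrating the derivative of `e^{x cos τ} (x sin τ cos τ - sin τ)`,
which vanishes at `0` and `π`, gives the modified Bessel equation `x² I₁'' + x I₁' - (x² + 1) I₁ = 0`.
For `y r = u (k r) / r` this equation becomes `3 y' + r y'' = k² r y`. With `k = f₁ / L_c` we have
`a₁ μ L_c² k² = 2 (μ_e + μ_micro)`, and what is left of the equilibrium equation says that the
constant `-μ_e / (μ_e + μ_micro)` is a particular solution.
-/

open Real intervalIntegral

noncomputable section

def besselIntegral (n : ℕ) (x : ℝ) : ℝ :=
  ∫ τ in (0:ℝ)..π, exp (x * cos τ) * cos τ ^ n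

lemma besselI1_eq_besselIntegral_one : besselI1 = besselIntegral 1 := by
  funext x
  simp only [besselI1, besselIntegral, pow_one]

lemma continuous_besselIntegrand (n : ℕ) (x : ℝ) :
    Continuous fun τ : ℝ => exp (x * cos τ) * cos τ ^ n := by
  fun_prop

lemma norm_besselIntegrand_le (n : ℕ) (x τ : ℝ) :
    ‖exp (x * cos τ) * cos τ ^ n‖ ≤ exp |x| := by
  have hcos : |cos τ ^ n| ≤ 1 := by
    rw [abs_pow]
    exact pow_le_one₀ (abs_nonneg _) (abs_cos_le_one τ)
  have hexp : x * cos τ ≤ |x| := by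
    calc x * cos τ ≤ |x * cos τ| := le_abs_self _
      _ = |x| * |cos τ| := abs_mul _ _
      _ ≤ |x| := mul_le_of_le_one_right (abs_nonneg _) (abs_cos_le_one τ)
  rw [norm_mul, norm_of_nonneg (exp_pos _).le, norm_eq_abs]
  calc exp (x * cos τ) * |cos τ ^ n| ≤ exp |x| * 1 :=
        mul_le_mul (exp_le_exp.2 hexp) hcos (abs_nonneg _) (exp_pos _).le
    _ = exp |x| := mul_one _

lemma hasDerivAt_besselIntegral (n : ℕ) (x₀ : ℝ) :
    HasDerivAt (besselIntegral n) (besselIntegral (n + 1) x₀) x₀ := by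
  have hbound : ∀ᵐ τ ∂MeasureTheory.volume, τ ∈ Set.uIoc 0 π → ∀ x ∈ Metric.ball x₀ 1,
      ‖exp (x * cos τ) * cos τ ^ (n + 1)‖ ≤ exp (|x₀| + 1) := by
    refine Filter.Eventually.of_forall fun τ _ x hx => ?_
    have hx' : |x| ≤ |x₀| + 1 := by
      have := abs_sub_abs_le_abs_sub x x₀
      have := (Metric.mem_ball.1 hx).le
      rw [dist_eq] at this
      linarith
    exact (norm_besselIntegrand_le _ x τ).trans (exp_le_exp.2 hx')
  have hderiv : ∀ᵐ τ ∂MeasureTheory.volume, τ ∈ Set.uIoc 0 π → ∀ x ∈ Metric.ball x₀ 1,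
      HasDerivAt (fun x => exp (x * cos τ) * cos τ ^ n) (exp (x * cos τ) * cos τ ^ (n + 1)) x := by
    refine Filter.Eventually.of_forall fun τ _ x _ => ?_
    refine ((((hasDerivAt_id x).mul_const (cos τ)).exp).mul_const (cos τ ^ n)).congr_deriv ?_
    simp only [id]
    ring
  exact (hasDerivAt_integral_of_dominated_loc_of_deriv_le (Metric.ball_mem_nhds x₀ one_pos)
    (Filter.Eventually.of_forall fun x => (continuous_besselIntegrand n x).aestronglyMeasurable)
    ((continuous_besselIntegrand n x₀).intervalIntegrable _ _)
    (continuous_besselIntegrand (n + 1) x₀).aestronglyMeasurable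
    hbound intervalIntegrable_const hderiv).2

lemma besselIntegral_bessel_ode (x : ℝ) :
    x ^ 2 * besselIntegral 3 x + x * besselIntegral 2 x
      - (x ^ 2 + 1) * besselIntegral 1 x = 0 := by
  have hint : ∀ m : ℕ, IntervalIntegrable (fun τ => exp (x * cos τ) * cos τ ^ m)
      MeasureTheory.volume 0 π :=
    fun m => (continuous_besselIntegrand m x).intervalIntegrable _ _
  have hFTC : ∀ τ ∈ Set.uIcc 0 π,
      HasDerivAt (fun τ => exp (x * cos τ) * (x * sin τ * cos τ - sin τ))
        (x ^ 2 * (exp (x * cos τ) * cos τ ^ 3) + x * (exp (x * cos τ) * cos τ ^ 2)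
          - (x ^ 2 + 1) * (exp (x * cos τ) * cos τ ^ 1)) τ := by
    intro τ _
    refine ((((hasDerivAt_cos τ).const_mul x).exp).mul
      ((((hasDerivAt_sin τ).const_mul x).mul (hasDerivAt_cos τ)).sub
        (hasDerivAt_sin τ))).congr_deriv ?_
    simp only [Pi.mul_apply, Pi.sub_apply]
    linear_combination (-Real.exp (x * cos τ) * x ^ 2 * cos τ) * Real.sin_sq_add_cos_sq τ
  have hvanish := integral_eq_sub_of_hasDerivAt hFTC
    ((((hint 3).const_mul _).add ((hint 2).const_mul _)).sub ((hint 1).const_mul _))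
  simp only [sin_zero, sin_pi, mul_zero, zero_mul, sub_self] at hvanish
  rw [integral_sub (((hint 3).const_mul _).add ((hint 2).const_mul _)) ((hint 1).const_mul _),
    integral_add ((hint 3).const_mul _) ((hint 2).const_mul _), integral_const_mul,
    integral_const_mul, integral_const_mul] at hvanish
  exact hvanish

section RadialProfile

variable {u u' u'' : ℝ → ℝ} (k : ℝ)

lemma hasDerivAt_comp_mul_div (hu : ∀ x, HasDerivAt u (u' x) x) {s : ℝ} (hs : s ≠ 0) :
    HasDerivAt (fun s => u (k * s) / s) (k * u' (k * s) / s - u (k * s) / s ^ 2) s := by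
  refine (((hu (k * s)).comp s ((hasDerivAt_id s).const_mul k)).div (hasDerivAt_id s)
    hs).congr_deriv ?_
  simp only [id, Function.comp_apply]
  field_simp

lemma hasDerivAt_deriv_comp_mul_div (hu : ∀ x, HasDerivAt u (u' x) x)
    (hu' : ∀ x, HasDerivAt u' (u'' x) x) {s : ℝ} (hs : s ≠ 0) :
    HasDerivAt (deriv fun s => u (k * s) / s)
      (k ^ 2 * u'' (k * s) / s - 2 * k * u' (k * s) / s ^ 2 + 2 * u (k * s) / s ^ 3) s := by
  have hderiv : (deriv fun s => u (k * s) / s) =ᶠ[nhds s]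
      fun s => k * u' (k * s) / s - u (k * s) / s ^ 2 := by
    filter_upwards [eventually_ne_nhds hs] with t ht using (hasDerivAt_comp_mul_div k hu ht).deriv
  refine HasDerivAt.congr_of_eventuallyEq ?_ hderiv
  have hk := (hasDerivAt_id s).const_mul k
  refine ((((hu' (k * s)).comp s hk).const_mul k).div (hasDerivAt_id s) hs |>.sub
    (((hu (k * s)).comp s hk).div (hasDerivAt_pow 2 s) (pow_ne_zero 2 hs))).congr_deriv ?_
  simp only [id, Function.comp_apply]
  field_simp
  ring

lemma radial_operator_comp_mul_div (hu : ∀ x, HasDerivAt u (u' x) x)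
    (hu' : ∀ x, HasDerivAt u' (u'' x) x)
    (hode : ∀ x, x ^ 2 * u'' x + x * u' x - (x ^ 2 + 1) * u x = 0) {r : ℝ} (hr : r ≠ 0) :
    3 * deriv (fun s => u (k * s) / s) r + r * deriv (deriv fun s => u (k * s) / s) r
      = k ^ 2 * u (k * r) := by
  rw [(hasDerivAt_comp_mul_div k hu hr).deriv, (hasDerivAt_deriv_comp_mul_div k hu hu' hr).deriv]
  field_simp
  linear_combination hode (k * r)

end RadialProfile

/-- g_m(r) = A·I₁(f₁r/L_c)/r − μ_e/(μ_e+μ_micro) is twice differentiable on (0,∞)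
and solves the micro-strain torsion equilibrium equation. -/
theorem microstrain_torsion_solution
    (μ Lc a₁ μe μmicro : ℝ) (hμ : 0 < μ) (hLc : 0 < Lc) (ha₁ : 0 < a₁)
    (hμe : 0 < μe) (hμmicro : 0 < μmicro) (A : ℝ) :
    ∀ r : ℝ, 0 < r →
      DifferentiableAt ℝ
        (fun s => A * besselI1 (Real.sqrt (2 * (μe + μmicro) / (a₁ * μ)) * s / Lc) / s
          - μe / (μe + μmicro)) r ∧
      DifferentiableAt ℝ
        (deriv (fun s => A * besselI1 (Real.sqrt (2 * (μe + μmicro) / (a₁ * μ)) * s / Lc) / s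
          - μe / (μe + μmicro))) r ∧
      a₁ * μ * Lc ^ 2 *
          (3 * deriv (fun s =>
              A * besselI1 (Real.sqrt (2 * (μe + μmicro) / (a₁ * μ)) * s / Lc) / s
                - μe / (μe + μmicro)) r
            + r * deriv (deriv (fun s =>
              A * besselI1 (Real.sqrt (2 * (μe + μmicro) / (a₁ * μ)) * s / Lc) / s
                - μe / (μe + μmicro))) r)
        - 2 * r * μe *
            ((fun s => A * besselI1 (Real.sqrt (2 * (μe + μmicro) / (a₁ * μ)) * s / Lc) / s
              - μe / (μe + μmicro)) r + 1)
        - 2 * r * ((fun s => A * besselI1 (Real.sqrt (2 * (μe + μmicro) / (a₁ * μ)) * s / Lc) / s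
              - μe / (μe + μmicro)) r) * μmicro
        = 0 := by
  intro r hr
  set k := √(2 * (μe + μmicro) / (a₁ * μ)) / Lc
  have hk : a₁ * μ * Lc ^ 2 * k ^ 2 = 2 * (μe + μmicro) := by
    rw [div_pow, sq_sqrt (by positivity)]
    field_simp
  set u : ℝ → ℝ := fun x => A * besselIntegral 1 x
  have hu : ∀ x, HasDerivAt u (A * besselIntegral 2 x) x :=
    fun x => (hasDerivAt_besselIntegral 1 x).const_mul A
  have hu' : ∀ x, HasDerivAt (fun x => A * besselIntegral 2 x) (A * besselIntegral 3 x) x :=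
    fun x => (hasDerivAt_besselIntegral 2 x).const_mul A
  have hode : ∀ x, x ^ 2 * (A * besselIntegral 3 x) + x * (A * besselIntegral 2 x)
      - (x ^ 2 + 1) * u x = 0 :=
    fun x => by linear_combination A * besselIntegral_bessel_ode x
  have hg : (fun s => A * besselI1 (√(2 * (μe + μmicro) / (a₁ * μ)) * s / Lc) / s
      - μe / (μe + μmicro)) = fun s => u (k * s) / s - μe / (μe + μmicro) := by
    simp only [u, k, besselI1_eq_besselIntegral_one, div_mul_eq_mul_div]
  rw [hg, deriv_sub_const_fun]
  refine ⟨(hasDerivAt_comp_mul_div k hu hr.ne').differentiableAt.sub_const _,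
    (hasDerivAt_deriv_comp_mul_div k hu hu' hr.ne').differentiableAt, ?_⟩
  rw [radial_operator_comp_mul_div k hu hu' hode hr.ne']
  field_simp
  linear_combination (u (k * r) * (μe + μmicro)) * hk
end
end

section
/- Let μ_e, μ_c, μ_micro, κ_e, κ_micro > 0 and let G be any 3×3 real matrix. Define f : ℝ^{3×3} → ℝ by f(P) = μ_e·‖dev sym(G − P)‖² + (κ_e/2)·tr²(G − P) + μ_c·‖skew(G − P)‖² + μ_micro·‖dev sym P‖² + (κ_micro/2)·tr²(P). Then f has a unique global minimizer P*, characterized by dev sym P* = (μ_e/(μ_e + μ_micro))·dev sym G, skew P* = skew G, and tr P* = (κ_e/(κ_e + κ_micro))·tr G; moreover f(P) > f(P*) for every P ≠ P*. -/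
open Matrix

noncomputable section

/-- The micromorphic lower-order energy as a function of the micro-distortion P,
with fixed displacement gradient G. -/
def microEnergy (μe μc μmicro κe κmicro : ℝ) (G P : Mat3) : ℝ :=
  μe * frob2 (dev3 (symm3 (G - P))) + κe / 2 * (Matrix.trace (G - P)) ^ 2
    + μc * frob2 (skew3 (G - P))
    + μmicro * frob2 (dev3 (symm3 P)) + κmicro / 2 * (Matrix.trace P) ^ 2

/-! Every matrix splits uniquely as `P = dev sym P + skew P + (tr P / 3) 𝟙`, and the energy only
sees these three parts. In each of them it is a sum of two weighted squared distances,
`α‖g - x‖² + β‖x‖²`, which completing the square rewrites as `(α + β)‖x - α/(α + β) g‖²` plus a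
constant depending on `g` alone; the three squares vanish exactly at the parts of the claimed
minimizer. -/

lemma mul_sub_sq_add_mul_sq (α β g x : ℝ) (h : α + β ≠ 0) :
    α * (g - x) ^ 2 + β * x ^ 2
      = (α + β) * (x - α / (α + β) * g) ^ 2 + α * β / (α + β) * g ^ 2 := by
  field_simp
  ring

lemma frob2_nonneg (X : Mat3) : 0 ≤ frob2 X :=
  Finset.sum_nonneg fun _ _ => Finset.sum_nonneg fun _ _ => sq_nonneg _

lemma frob2_eq_zero_iff {X : Mat3} : frob2 X = 0 ↔ X = 0 := by
  simp [frob2, Finset.sum_eq_zero_iff_of_nonneg, Finset.sum_nonneg, sq_nonneg, ← Matrix.ext_iff]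

lemma frob2_pos {X : Mat3} (h : X ≠ 0) : 0 < frob2 X :=
  (frob2_nonneg X).lt_of_ne' (frob2_eq_zero_iff.not.mpr h)

lemma mul_frob2_sub_add_mul_frob2 (α β : ℝ) (G X : Mat3) (h : α + β ≠ 0) :
    α * frob2 (G - X) + β * frob2 X
      = (α + β) * frob2 (X - (α / (α + β)) • G) + α * β / (α + β) * frob2 G := by
  simp only [frob2, Finset.mul_sum, ← Finset.sum_add_distrib, Matrix.sub_apply, Matrix.smul_apply,
    smul_eq_mul, mul_sub_sq_add_mul_sq α β _ _ h]

lemma dev3_symm3_sub (A B : Mat3) :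
    dev3 (symm3 (A - B)) = dev3 (symm3 A) - dev3 (symm3 B) := by
  ext i j
  fin_cases i <;> fin_cases j <;>
    simp [dev3, symm3, trace, Fin.sum_univ_three] <;> ring

lemma skew3_sub (A B : Mat3) : skew3 (A - B) = skew3 A - skew3 B := by
  ext i j
  simp [skew3]
  ring

lemma transpose_dev3_symm3 (X : Mat3) : (dev3 (symm3 X))ᵀ = dev3 (symm3 X) := by
  ext i j
  simp [dev3, symm3, Matrix.one_apply, eq_comm]
  ring

lemma trace_dev3 (X : Mat3) : trace (dev3 X) = 0 := by
  simp [dev3, trace_sub, trace_smul, trace_one]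

lemma transpose_smul_dev3_symm3 (c : ℝ) (X : Mat3) :
    (c • dev3 (symm3 X))ᵀ = c • dev3 (symm3 X) := by
  rw [transpose_smul, transpose_dev3_symm3]

lemma trace_smul_dev3 (c : ℝ) (X : Mat3) : trace (c • dev3 X) = 0 := by
  rw [trace_smul, trace_dev3, smul_zero]

lemma transpose_skew3 (X : Mat3) : (skew3 X)ᵀ = -skew3 X := by
  simp only [skew3, transpose_smul, transpose_sub, transpose_transpose]
  module

def ofParts (D S : Mat3) (t : ℝ) : Mat3 := D + S + (t / 3) • (1 : Mat3)

lemma ofParts_parts (X : Mat3) : ofParts (dev3 (symm3 X)) (skew3 X) (trace X) = X := by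
  ext i j
  fin_cases i <;> fin_cases j <;>
    simp [ofParts, dev3, symm3, skew3, trace, Fin.sum_univ_three] <;> ring

section ofParts

variable {D S : Mat3} (t : ℝ)

lemma symm3_ofParts (hD : Dᵀ = D) (hS : Sᵀ = -S) :
    symm3 (ofParts D S t) = D + (t / 3) • 1 := by
  simp only [symm3, ofParts, transpose_add, transpose_smul, transpose_one, hD, hS]
  module

lemma dev3_symm3_ofParts (hD : Dᵀ = D) (hDtr : trace D = 0) (hS : Sᵀ = -S) :
    dev3 (symm3 (ofParts D S t)) = D := by
  simp [symm3_ofParts t hD hS, dev3, trace_add, trace_smul, hDtr]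

lemma skew3_ofParts (hD : Dᵀ = D) (hS : Sᵀ = -S) : skew3 (ofParts D S t) = S := by
  simp only [skew3, ofParts, transpose_add, transpose_smul, transpose_one, hD, hS]
  module

lemma trace_ofParts (hDtr : trace D = 0) (hS : Sᵀ = -S) : trace (ofParts D S t) = t := by
  have hStr : trace S = 0 := by
    have := trace_transpose S
    rw [hS, trace_neg] at this
    linarith
  simp [ofParts, trace_add, trace_smul, hDtr, hStr]

end ofParts

lemma microEnergy_eq_complete_square (μe μc μmicro κe κmicro : ℝ) (hμ : μe + μmicro ≠ 0)
    (hκ : κe + κmicro ≠ 0) (G P : Mat3) :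
    microEnergy μe μc μmicro κe κmicro G P
      = (μe + μmicro) * frob2 (dev3 (symm3 P) - (μe / (μe + μmicro)) • dev3 (symm3 G))
        + μc * frob2 (skew3 G - skew3 P)
        + (κe + κmicro) / 2 * (trace P - κe / (κe + κmicro) * trace G) ^ 2
        + (μe * μmicro / (μe + μmicro) * frob2 (dev3 (symm3 G))
          + κe * κmicro / (κe + κmicro) / 2 * trace G ^ 2) := by
  have hdev := mul_frob2_sub_add_mul_frob2 μe μmicro (dev3 (symm3 G)) (dev3 (symm3 P)) hμ
  have htr := mul_sub_sq_add_mul_sq κe κmicro (trace G) (trace P) hκ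
  rw [microEnergy, dev3_symm3_sub, skew3_sub, trace_sub]
  linear_combination hdev + htr / 2

/-- the micromorphic lower-order energy has a unique global minimizer P*,
characterized by its deviatoric-symmetric, skew and trace parts. -/
theorem microEnergy_unique_minimizer (μe μc μmicro κe κmicro : ℝ)
    (hμe : 0 < μe) (hμc : 0 < μc) (hμmicro : 0 < μmicro)
    (hκe : 0 < κe) (hκmicro : 0 < κmicro) (G : Mat3) :
    ∃ Pstar : Mat3,
      dev3 (symm3 Pstar) = (μe / (μe + μmicro)) • dev3 (symm3 G) ∧
      skew3 Pstar = skew3 G ∧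
      Matrix.trace Pstar = κe / (κe + κmicro) * Matrix.trace G ∧
      ∀ P : Mat3, P ≠ Pstar →
        microEnergy μe μc μmicro κe κmicro G Pstar
          < microEnergy μe μc μmicro κe κmicro G P := by
  set a := μe / (μe + μmicro) with ha
  set b := κe / (κe + κmicro) with hb
  have hμ : 0 < μe + μmicro := by positivity
  have hκ : 0 < κe + κmicro := by positivity
  have hD := transpose_smul_dev3_symm3 a G
  have hDtr := trace_smul_dev3 a (symm3 G)
  have hS := transpose_skew3 G
  have hdev := dev3_symm3_ofParts (b * trace G) hD hDtr hS
  have hskew := skew3_ofParts (b * trace G) hD hS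
  have htr := trace_ofParts (b * trace G) hDtr hS
  refine ⟨_, hdev, hskew, htr, fun P hP => ?_⟩
  have hparts :
      dev3 (symm3 P) ≠ a • dev3 (symm3 G) ∨ skew3 G ≠ skew3 P ∨ trace P ≠ b * trace G := by
    contrapose! hP
    rw [← hP.1, hP.2.1, ← hP.2.2, ofParts_parts]
  rw [microEnergy_eq_complete_square _ _ _ _ _ hμ.ne' hκ.ne', hdev, hskew, htr,
    microEnergy_eq_complete_square _ _ _ _ _ hμ.ne' hκ.ne']
  simp only [← ha, ← hb, sub_self, frob2_eq_zero_iff.mpr, mul_zero, zero_pow two_ne_zero,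
    add_zero]
  have hdev_nonneg := mul_nonneg hμ.le (frob2_nonneg (dev3 (symm3 P) - a • dev3 (symm3 G)))
  have hskew_nonneg := mul_nonneg hμc.le (frob2_nonneg (skew3 G - skew3 P))
  have htr_nonneg := mul_nonneg (half_pos hκ).le (sq_nonneg (trace P - b * trace G))
  rcases hparts with h | h | h
  · linarith [mul_pos hμ (frob2_pos (sub_ne_zero.mpr h))]
  · linarith [mul_pos hμc (frob2_pos (sub_ne_zero.mpr h))]
  · linarith [mul_pos (half_pos hκ) (sq_pos_of_ne_zero (sub_ne_zero.mpr h))]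
end
end
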